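/- Let |φ₀⟩ = (1/√n)·Σᵢ eᵢ be the uniform unit vector in ℝⁿ and |m⟩ = e_m a standard basis vector. Define H(s) = (1−s)(I − |φ₀⟩⟨φ₀|) + s(I − |m⟩⟨m|). Restricted to the 2-dimensional span of |φ₀⟩ and |m⟩, the two eigenvalues of H(s) are (1 ± √(1 − 4s(1−s)(1 − 1/n)))/2, so the spectral gap in this subspace at s = 1/2 equals 1/√n. -/

import Mathlib

/-!
Write `c = ⟨φ₀, e_m⟩ = 1/√n`. Each `I - |u⟩⟨u|` with `u ∈ {φ₀, e_m}` maps `span {φ₀, e_m}` into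
itself, and in the non-orthogonal basis `φ₀, e_m` the restriction of `H(s)` is a 2×2 matrix `M`
with characteristic polynomial `λ² - λ + s(1-s)(1-c²)`, whose roots are the two claimed
eigenvalues. A nonzero kernel vector of `M - λ` yields an eigenvector of `H(s)`, nonzero because
`c² ≠ 1` forces `φ₀, e_m` to be independent. At `s = 1/2` the discriminant is `c² = 1/n`.
-/

open Matrix

theorem Matrix.one_sub_vecMulVec_self_mulVec {ι R : Type*} [Fintype ι] [DecidableEq ι]
    [CommRing R] (u v : ι → R) :
    (1 - vecMulVec u u) *ᵥ v = v - (u ⬝ᵥ v) • u := by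
  rw [sub_mulVec, one_mulVec, vecMulVec_mulVec, op_smul_eq_smul]

section AdiabaticHamiltonian

variable {ι : Type*} [Fintype ι]

theorem linearIndependent_pair_of_dotProduct {u w : ι → ℝ}
    (hu : u ⬝ᵥ u = 1) (hw : w ⬝ᵥ w = 1) (huw : (u ⬝ᵥ w) ^ 2 ≠ 1) :
    LinearIndependent ℝ ![u, w] := by
  refine LinearIndependent.pair_iff.mpr fun a b hab => ?_
  have hu' : a + b * (u ⬝ᵥ w) = 0 := by
    simpa [dotProduct_add, hu, dotProduct_comm w u] using congrArg (u ⬝ᵥ ·) hab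
  have hw' : a * (u ⬝ᵥ w) + b = 0 := by
    simpa [dotProduct_add, hw, dotProduct_comm w u] using congrArg (w ⬝ᵥ ·) hab
  have ha : a * (1 - (u ⬝ᵥ w) ^ 2) = 0 := by linear_combination hu' - (u ⬝ᵥ w) * hw'
  have ha : a = 0 := by simpa [sub_eq_zero, Ne.symm huw] using ha
  exact ⟨ha, by simpa [ha] using hw'⟩

variable [DecidableEq ι]

def adiabaticHamiltonian (s : ℝ) (u w : ι → ℝ) : Matrix ι ι ℝ :=
  (1 - s) • (1 - vecMulVec u u) + s • (1 - vecMulVec w w)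

theorem adiabaticHamiltonian_mulVec_add_smul (s a b : ℝ) {u w : ι → ℝ}
    (hu : u ⬝ᵥ u = 1) (hw : w ⬝ᵥ w = 1) :
    adiabaticHamiltonian s u w *ᵥ (a • u + b • w) =
      (s * a - (1 - s) * (u ⬝ᵥ w) * b) • u + ((1 - s) * b - s * (u ⬝ᵥ w) * a) • w := by
  simp only [adiabaticHamiltonian, add_mulVec, smul_mulVec, one_sub_vecMulVec_self_mulVec,
    dotProduct_add, dotProduct_smul, hu, hw, dotProduct_comm w u, smul_eq_mul]
  module

theorem adiabaticHamiltonian_exists_eigenvector_mem_span {s lam : ℝ} {u w : ι → ℝ}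
    (hu : u ⬝ᵥ u = 1) (hw : w ⬝ᵥ w = 1) (hind : LinearIndependent ℝ ![u, w])
    (hlam : lam ^ 2 - lam + s * (1 - s) * (1 - (u ⬝ᵥ w) ^ 2) = 0) :
    ∃ v ∈ Submodule.span ℝ {u, w}, v ≠ 0 ∧ adiabaticHamiltonian s u w *ᵥ v = lam • v := by
  obtain ⟨x, hx0, hx⟩ : ∃ x ≠ 0,
      !![s - lam, -((1 - s) * (u ⬝ᵥ w)); -(s * (u ⬝ᵥ w)), 1 - s - lam] *ᵥ x = 0 :=
    exists_mulVec_eq_zero_iff.mpr (by rw [det_fin_two_of]; linear_combination hlam)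
  have h0 := congrFun hx 0
  have h1 := congrFun hx 1
  simp only [mulVec, vec2_dotProduct, of_apply, cons_val', cons_val_zero, cons_val_one,
    empty_val', cons_val_fin_one, Pi.zero_apply] at h0 h1
  refine ⟨x 0 • u + x 1 • w, ?_, ?_, ?_⟩
  · exact Submodule.mem_span_pair.mpr ⟨x 0, x 1, rfl⟩
  · intro hv
    obtain ⟨ha, hb⟩ := LinearIndependent.pair_iff.mp hind _ _ hv
    exact hx0 (by ext i; fin_cases i <;> assumption)
  · rw [adiabaticHamiltonian_mulVec_add_smul s _ _ hu hw, smul_add]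
    match_scalars
    · linear_combination h0
    · linear_combination h1

end AdiabaticHamiltonian

theorem sq_sub_self_add_eq_zero_of_mem_roots {D lam : ℝ} (hD : 0 ≤ D)
    (hlam : lam ∈ ({(1 + √D) / 2, (1 - √D) / 2} : Set ℝ)) :
    lam ^ 2 - lam + (1 - D) / 4 = 0 := by
  have hsq : √D ^ 2 = D := Real.sq_sqrt hD
  rcases hlam with rfl | rfl <;> linear_combination hsq / 4

theorem one_sub_four_mul_mul_one_sub_mul_nonneg {s t : ℝ} (hs : s ∈ Set.Icc (0 : ℝ) 1)
    (ht : t ∈ Set.Icc (0 : ℝ) 1) : 0 ≤ 1 - 4 * s * (1 - s) * t := by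
  have hs' : 0 ≤ s * (1 - s) := mul_nonneg hs.1 (sub_nonneg.2 hs.2)
  nlinarith [ht.1, ht.2, sq_nonneg (2 * s - 1)]

theorem uniform_dotProduct_self {n : ℕ} (hn : n ≠ 0) :
    (fun _ : Fin n => 1 / √(n : ℝ)) ⬝ᵥ (fun _ => 1 / √(n : ℝ)) = 1 := by
  have : (0 : ℝ) < n := by positivity
  simp [dotProduct, Real.sq_sqrt this.le, ← sq]
  field_simp

/-- Adiabatic Grover Hamiltonian `H(s) = (1-s)(I - |φ₀⟩⟨φ₀|) + s(I - |m⟩⟨m|)` with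
`φ₀ = (1/√n)(1,…,1)`. Restricted to the 2-dimensional span of `φ₀` and `e_m`, its two
eigenvalues are `(1 ± √(1 - 4s(1-s)(1 - 1/n)))/2`; the corresponding spectral gap at
`s = 1/2` equals `1/√n`. -/
theorem stmt_12 (n : ℕ) (hn : 2 ≤ n) (m : Fin n) (s : ℝ) (hs : s ∈ Set.Icc (0 : ℝ) 1)
    (φ₀ : Fin n → ℝ) (hφ₀ : φ₀ = fun _ => 1 / Real.sqrt n)
    (em : Fin n → ℝ) (hem : em = Pi.single m 1)
    (H : Matrix (Fin n) (Fin n) ℝ)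
    (hH : H = (1 - s) • (1 - Matrix.vecMulVec φ₀ φ₀) + s • (1 - Matrix.vecMulVec em em))
    (D : ℝ) (hD : D = 1 - 4 * s * (1 - s) * (1 - 1 / n)) :
    (∀ lam ∈ ({(1 + Real.sqrt D) / 2, (1 - Real.sqrt D) / 2} : Set ℝ),
      ∃ v ∈ Submodule.span ℝ ({φ₀, em} : Set (Fin n → ℝ)),
        v ≠ 0 ∧ H.mulVec v = lam • v) ∧
    (1 + Real.sqrt (1 - 4 * (1/2) * (1 - (1/2)) * (1 - 1 / n))) / 2 -
        (1 - Real.sqrt (1 - 4 * (1/2) * (1 - (1/2)) * (1 - 1 / n))) / 2 =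
      1 / Real.sqrt n := by
  subst hφ₀ hem hH hD
  have hφ₀ := uniform_dotProduct_self (n := n) (by omega)
  have hem : (Pi.single m 1 : Fin n → ℝ) ⬝ᵥ Pi.single m 1 = 1 := by simp
  have hc : (fun _ : Fin n => 1 / √(n : ℝ)) ⬝ᵥ Pi.single m 1 = 1 / √(n : ℝ) := by simp
  have hc2 : (1 / √(n : ℝ)) ^ 2 = 1 / n := by rw [div_pow, Real.sq_sqrt (by positivity), one_pow]
  have hinv : 1 / (n : ℝ) ≤ 1 / 2 := one_div_le_one_div_of_le two_pos (by exact_mod_cast hn)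
  have hinv0 : 0 ≤ 1 / (n : ℝ) := by positivity
  refine ⟨fun lam hlam => ?_, ?_⟩
  · have hD := one_sub_four_mul_mul_one_sub_mul_nonneg hs (t := 1 - 1 / n)
      ⟨by linarith, by linarith⟩
    have hind := linearIndependent_pair_of_dotProduct hφ₀ hem (by rw [hc, hc2]; linarith)
    refine adiabaticHamiltonian_exists_eigenvector_mem_span hφ₀ hem hind ?_
    rw [hc, hc2]
    linear_combination sq_sub_self_add_eq_zero_of_mem_roots hD hlam
  · rw [show (1 : ℝ) - 4 * (1 / 2) * (1 - 1 / 2) * (1 - 1 / n) = (n : ℝ)⁻¹ by ring,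
      Real.sqrt_inv]
    ring
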